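/- Type preservation for eliminating simple variant subtyping: the local term-involved translation ⟦-⟧ from λ_⟨⟩^{≤} to λ_⟨⟩, which replaces each upcast M^{⟨ℓ_i:A_i⟩_i} ▷ ⟨R⟩ by case ⟦M⟧ {ℓ_i x_i ↦ (ℓ_i x_i)^{⟨R⟩}}_i and is homomorphic elsewhere, maps every well-typed term Δ;Γ ⊢ M : A to a well-typed term Δ;Γ ⊢ ⟦M⟧ : A. -/

import Mathlib

namespace Stmt4

abbrev Label := ℕ

/-- Types of λ_⟨⟩^{≤}: base type variables, functions, variant types over rows. -/
inductive Ty : Type where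
  | tvar : ℕ → Ty
  | arrow : Ty → Ty → Ty
  | variant : List (Label × Ty) → Ty

/-- Simple (width) variant subtyping on rows:
dom(R) ⊆ dom(R') and R'|_{dom R} = R. -/
def VSub (R R' : List (Label × Ty)) : Prop :=
  ∀ ℓ A, List.lookup ℓ R = some A → List.lookup ℓ R' = some A

/-- Subtyping on types of λ_⟨⟩^{≤}: only the shallow variant rule. -/
inductive Sub : Ty → Ty → Prop where
  | variant {R R'} : VSub R R' → Sub (.variant R) (.variant R')

/-- Terms, de Bruijn indices.  `inj ℓ M A` is the annotated injection (ℓ M)^A and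
`upcast M A B` is the annotated upcast M^A ▷ B. -/
inductive Tm : Type where
  | var : ℕ → Tm
  | lam : Ty → Tm → Tm
  | app : Tm → Tm → Tm
  | inj : Label → Tm → Ty → Tm
  | case : Tm → List (Label × Tm) → Tm
  | upcast : Tm → Ty → Ty → Tm

mutual
/-- Shift de Bruijn indices ≥ c up by one. -/
def shiftTm (c : ℕ) : Tm → Tm
  | .var n => if n < c then .var n else .var (n + 1)
  | .lam A M => .lam A (shiftTm (c + 1) M)
  | .app M N => .app (shiftTm c M) (shiftTm c N)
  | .inj ℓ M A => .inj ℓ (shiftTm c M) A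
  | .case M Bs => .case (shiftTm c M) (shiftBs (c + 1) Bs)
  | .upcast M A B => .upcast (shiftTm c M) A B
def shiftBs (c : ℕ) : List (Label × Tm) → List (Label × Tm)
  | [] => []
  | (ℓ, M) :: Bs => (ℓ, shiftTm c M) :: shiftBs c Bs
end

mutual
/-- Capture-avoiding substitution of N for de Bruijn index k. -/
def substTm (k : ℕ) (N : Tm) : Tm → Tm
  | .var n => if n = k then N else if n < k then .var n else .var (n - 1)
  | .lam A M => .lam A (substTm (k + 1) (shiftTm 0 N) M)
  | .app M₁ M₂ => .app (substTm k N M₁) (substTm k N M₂)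
  | .inj ℓ M A => .inj ℓ (substTm k N M) A
  | .case M Bs => .case (substTm k N M) (substBs (k + 1) (shiftTm 0 N) Bs)
  | .upcast M A B => .upcast (substTm k N M) A B
def substBs (k : ℕ) (N : Tm) : List (Label × Tm) → List (Label × Tm)
  | [] => []
  | (ℓ, M) :: Bs => (ℓ, substTm k N M) :: substBs k N Bs
end

/-- Typing of λ_⟨⟩^{≤} (contexts are de Bruijn lists of types). -/
inductive HasTy : List Ty → Tm → Ty → Prop where
  | var {Γ n A} : Γ[n]? = some A → HasTy Γ (.var n) A
  | lam {Γ A B M} : HasTy (A :: Γ) M B → HasTy Γ (.lam A M) (.arrow A B)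
  | app {Γ A B M N} : HasTy Γ M (.arrow A B) → HasTy Γ N A → HasTy Γ (.app M N) B
  | inj {Γ ℓ R A M} : List.lookup ℓ R = some A → HasTy Γ M A →
      HasTy Γ (.inj ℓ M (.variant R)) (.variant R)
  | case {Γ R M Bs C} : HasTy Γ M (.variant R) →
      (∀ ℓ A, List.lookup ℓ R = some A → (List.lookup ℓ Bs).isSome) →
      (∀ ℓ A N, List.lookup ℓ R = some A → List.lookup ℓ Bs = some N →
        HasTy (A :: Γ) N C) →
      HasTy Γ (.case M Bs) C
  | upcast {Γ R R' M} : HasTy Γ M (.variant R) → VSub R R' →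
      HasTy Γ (.upcast M (.variant R) (.variant R')) (.variant R')

mutual
/-- The local term-involved translation ⟦-⟧ from λ_⟨⟩^{≤} to λ_⟨⟩:
upcasts are η-expanded into case splits; homomorphic elsewhere. -/
def trTm : Tm → Tm
  | .var n => .var n
  | .lam A M => .lam A (trTm M)
  | .app M N => .app (trTm M) (trTm N)
  | .inj ℓ M A => .inj ℓ (trTm M) A
  | .case M Bs => .case (trTm M) (trBs Bs)
  | .upcast M (.variant R) B =>
      .case (trTm M) (R.map (fun p => (p.1, Tm.inj p.1 (Tm.var 0) B)))
  | .upcast M A _ => .upcast (trTm M) A A  -- impossible for well-typed terms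
def trBs : List (Label × Tm) → List (Label × Tm)
  | [] => []
  | (ℓ, M) :: Bs => (ℓ, trTm M) :: trBs Bs
end

/-- A term of λ_⟨⟩ (upcast-free). -/
def UpcastFree : Tm → Prop := fun _ => True

/-- β-reduction base rules. -/
inductive Beta : Tm → Tm → Prop where
  | lam {A M N} : Beta (.app (.lam A M) N) (substTm 0 N M)
  | case {ℓ M A Bs N} : List.lookup ℓ Bs = some N →
      Beta (.case (.inj ℓ M A) Bs) (substTm 0 M N)

/-- Upcast reduction base rule: (ℓ M)^A ▷ B ⇝ (ℓ M)^B. -/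
inductive Up : Tm → Tm → Prop where
  | inj {ℓ M A' A B} : Up (.upcast (.inj ℓ M A') A B) (.inj ℓ M B)

/-- Compatible closure of a base reduction relation. -/
inductive Compat (r : Tm → Tm → Prop) : Tm → Tm → Prop where
  | base {M N} : r M N → Compat r M N
  | lam {A M M'} : Compat r M M' → Compat r (.lam A M) (.lam A M')
  | appL {M M' N} : Compat r M M' → Compat r (.app M N) (.app M' N)
  | appR {M N N'} : Compat r N N' → Compat r (.app M N) (.app M N')
  | inj {ℓ M M' A} : Compat r M M' → Compat r (.inj ℓ M A) (.inj ℓ M' A)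
  | caseScrut {M M' Bs} : Compat r M M' → Compat r (.case M Bs) (.case M' Bs)
  | caseBranch {M Bs₁ Bs₂ ℓ N N'} : Compat r N N' →
      Compat r (.case M (Bs₁ ++ (ℓ, N) :: Bs₂)) (.case M (Bs₁ ++ (ℓ, N') :: Bs₂))
  | upcast {M M' A B} : Compat r M M' → Compat r (.upcast M A B) (.upcast M' A B)

/-- One-step reduction by β or upcast. -/
def BetaUp : Tm → Tm → Prop := fun M N => Beta M N ∨ Up M N


/-- Typing of the target calculus λ_⟨⟩ (no upcast rule). -/
inductive HasTyV : List Ty → Tm → Ty → Prop where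
  | var {Γ n A} : Γ[n]? = some A → HasTyV Γ (.var n) A
  | lam {Γ A B M} : HasTyV (A :: Γ) M B → HasTyV Γ (.lam A M) (.arrow A B)
  | app {Γ A B M N} : HasTyV Γ M (.arrow A B) → HasTyV Γ N A → HasTyV Γ (.app M N) B
  | inj {Γ ℓ R A M} : List.lookup ℓ R = some A → HasTyV Γ M A →
      HasTyV Γ (.inj ℓ M (.variant R)) (.variant R)
  | case {Γ R M Bs C} : HasTyV Γ M (.variant R) →
      (∀ ℓ A, List.lookup ℓ R = some A → (List.lookup ℓ Bs).isSome) →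
      (∀ ℓ A N, List.lookup ℓ R = some A → List.lookup ℓ Bs = some N →
        HasTyV (A :: Γ) N C) →
      HasTyV Γ (.case M Bs) C

theorem lookup_map_snd {α β γ : Type*} [BEq α] [LawfulBEq α] (l : List (α × β))
    (f : α → β → γ) (a : α) :
    (l.map fun p => (p.1, f p.1 p.2)).lookup a = (l.lookup a).map (f a) := by
  induction l with
  | nil => rfl
  | cons p l ih =>
    obtain ⟨k, b⟩ := p
    by_cases h : a = k
    · subst h; simp
    · simp [List.lookup_cons, beq_false_of_ne h, ih]

theorem trBs_eq_map (Bs : List (Label × Tm)) : trBs Bs = Bs.map fun p => (p.1, trTm p.2) := by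
  induction Bs with
  | nil => rfl
  | cons p Bs ih => simp only [trBs, ih, List.map_cons]

theorem HasTyV.case_of_branches {Γ : List Ty} {R : List (Label × Ty)} {M : Tm}
    {Bs : List (Label × Tm)} {C : Ty} (hM : HasTyV Γ M (.variant R))
    (hBs : ∀ ℓ A, List.lookup ℓ R = some A →
      ∃ N, List.lookup ℓ Bs = some N ∧ HasTyV (A :: Γ) N C) :
    HasTyV Γ (.case M Bs) C := by
  refine .case hM (fun ℓ A hA => ?_) (fun ℓ A N hA hN => ?_)
  · obtain ⟨N, hN, -⟩ := hBs ℓ A hA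
    simp [hN]
  · obtain ⟨N', hN', hty⟩ := hBs ℓ A hA
    obtain rfl : N = N' := Option.some_injective _ (hN.symm.trans hN')
    exact hty

theorem HasTyV.case_reinject {Γ : List Ty} {R R' : List (Label × Ty)} {M : Tm}
    (hM : HasTyV Γ M (.variant R)) (hsub : VSub R R') :
    HasTyV Γ (.case M (R.map fun p => (p.1, .inj p.1 (.var 0) (.variant R'))))
      (.variant R') :=
  hM.case_of_branches fun ℓ A hA =>
    ⟨.inj ℓ (.var 0) (.variant R'),
      by rw [lookup_map_snd R fun ℓ _ => Tm.inj ℓ (.var 0) (.variant R'), hA]; rfl,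
      .inj (hsub ℓ A hA) (.var rfl)⟩

theorem type_preservation {Γ : List Ty} {M : Tm} {A : Ty}
    (h : HasTy Γ M A) : HasTyV Γ (trTm M) A := by
  induction h with
  | var hn => exact .var hn
  | lam _ ih => exact .lam ih
  | app _ _ ihM ihN => exact .app ihM ihN
  | inj hℓ _ ih => exact .inj hℓ ih
  | case _ hcover _ ihM ihBs =>
    refine HasTyV.case_of_branches ihM fun ℓ A hA => ?_
    obtain ⟨N, hN⟩ := Option.isSome_iff_exists.mp (hcover ℓ A hA)
    refine ⟨trTm N, ?_, ihBs ℓ A N hA hN⟩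
    rw [trBs_eq_map, lookup_map_snd _ fun _ => trTm, hN]; rfl
  | upcast _ hsub ih => exact ih.case_reinject hsub

end Stmt4
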